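/- Let q̂, q̂' be positive integers and m, m' integers coprime to q̂, q̂' respectively. Define 𝔠 = Σ_{β mod q̂q̂'} S(\bar m, β; q̂) S(\bar{m'}, β; q̂') e(β n₂/(q̂q̂')). Then |𝔠| ≤ q̂ q̂' · gcd(q̂, q̂', n₂). Moreover, if n₂ = 0 then 𝔠 = 0 unless q̂ = q̂', in which case |𝔠| ≤ q̂ q̂' |c_{q̂}(m − m')|, where c_q(n) denotes the Ramanujan sum. -/

import Mathlib

open scoped Classical

noncomputable def e2 (x : ℝ) : ℂ := Complex.exp (2 * Real.pi * Complex.I * x)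

/-- The Kloosterman sum `S(a,b;c) = Σ*_{α mod c} e((aα + b ᾱ)/c)`. -/
noncomputable def kloos (a b : ℤ) (c : ℕ) : ℂ :=
  ∑ α ∈ Finset.range c, if Nat.Coprime α c then
    e2 (((a * α + b * ((((α : ZMod c)⁻¹).val : ℕ) : ℤ) : ℤ) : ℝ) / (c : ℝ)) else 0

/-- The Ramanujan sum `c_q(n) = Σ*_{α mod q} e(αn/q)`. -/
noncomputable def ramanujanSum (q : ℕ) (n : ℤ) : ℂ :=
  ∑ α ∈ Finset.range q, if Nat.Coprime α q then e2 ((((α : ℤ) * n : ℤ) : ℝ) / (q : ℝ)) else 0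

/-- `𝔠 = Σ_{β mod q̂ q̂'} S(m̄, β; q̂) S(m̄', β; q̂') e(β n₂/(q̂ q̂'))`. -/
noncomputable def charSum (qh qh' : ℕ) (m m' n₂ : ℤ) : ℂ :=
  ∑ β ∈ Finset.range (qh * qh'),
    kloos (((m : ZMod qh)⁻¹).val : ℤ) (β : ℤ) qh *
    kloos (((m' : ZMod qh')⁻¹).val : ℤ) (β : ℤ) qh' *
    e2 ((((β : ℤ) * n₂ : ℤ) : ℝ) / ((qh * qh' : ℕ) : ℝ))

/-!
Opening both Kloosterman sums and summing over `β` first, orthogonality of additive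
characters modulo `q̂q̂'` collapses `𝔠` to `q̂q̂'` times a sum of unimodular terms over the pairs
`(α, α')` of reduced residues with `ᾱq̂' + ᾱ'q̂ + n₂ ≡ 0 (mod q̂q̂')`. This congruence determines
`α'` from `α` and fixes `ᾱ` modulo `q̂ / gcd(q̂, q̂')`, so there are at most `gcd(q̂, q̂')` such
pairs, and none unless `gcd(q̂, q̂') ∣ n₂`. For `n₂ = 0` it forces `q̂ ∣ q̂'` and `q̂' ∣ q̂`; when
`q̂ = q̂'` it reads `α' ≡ -α`, which leaves `q̂² c_q̂(m̄ - m̄')`, and multiplying by the unit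
`-m̄m̄'` turns the argument into `m - m'`.
-/

open Finset Complex

lemma e2_add (x y : ℝ) : e2 (x + y) = e2 x * e2 y := by
  simp only [e2, Complex.ofReal_add, mul_add, Complex.exp_add]

lemma e2_intCast_div (q : ℕ) (k : ℤ) : e2 (k / q) = exp (2 * Real.pi * I / q) ^ k := by
  rw [e2, ← exp_int_mul]
  congr 1
  push_cast
  ring

lemma e2_intCast (k : ℤ) : e2 k = 1 := by
  simpa [div_one] using e2_intCast_div 1 k

lemma norm_e2 (x : ℝ) : ‖e2 x‖ = 1 := by
  rw [e2, show 2 * Real.pi * I * x = ((2 * Real.pi * x : ℝ) : ℂ) * I by push_cast; ring]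
  exact norm_exp_ofReal_mul_I _

lemma e2_div_congr {q : ℕ} {a b : ℤ} (h : (q : ℤ) ∣ a - b) : e2 (a / q) = e2 (b / q) := by
  obtain ⟨t, ht⟩ := h
  obtain rfl : a = b + q * t := by linarith
  rcases eq_or_ne q 0 with rfl | hq
  · simp
  · rw [show ((b + q * t : ℤ) : ℝ) / q = b / q + t by push_cast; field_simp, e2_add, e2_intCast,
      mul_one]

lemma sum_range_e2_mul_div (Q : ℕ) [NeZero Q] (k : ℤ) :
    ∑ β ∈ range Q, e2 ((β * k : ℤ) / Q) = if (Q : ℤ) ∣ k then (Q : ℂ) else 0 := by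
  have hterm (β : ℕ) : e2 ((β * k : ℤ) / Q) = (exp (2 * Real.pi * I / Q) ^ k) ^ β := by
    rw [e2_intCast_div, mul_comm (β : ℤ) k, zpow_mul, zpow_natCast]
  simp_rw [hterm]
  have hζ := isPrimitiveRoot_exp Q (NeZero.ne Q)
  generalize exp (2 * Real.pi * I / Q) = ζ at hζ ⊢
  split_ifs with h
  · simp [(hζ.zpow_eq_one_iff_dvd k).2 h]
  · have hr : ζ ^ k ≠ 1 := mt (hζ.zpow_eq_one_iff_dvd k).1 h
    have hrQ : (ζ ^ k) ^ Q = 1 := by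
      rw [← zpow_natCast, ← zpow_mul, mul_comm, zpow_mul, zpow_natCast, hζ.pow_eq_one, one_zpow]
    rw [geom_sum_eq hr, hrQ, sub_self, zero_div]

def reducedResidues (q : ℕ) : Finset ℕ := {α ∈ range q | α.Coprime q}

lemma mem_reducedResidues {q α : ℕ} : α ∈ reducedResidues q ↔ α < q ∧ α.Coprime q := by
  rw [reducedResidues, mem_filter, mem_range]

lemma isUnit_of_mem_reducedResidues {q α : ℕ} (h : α ∈ reducedResidues q) : IsUnit (α : ZMod q) :=
  (ZMod.isUnit_iff_coprime α q).2 (mem_reducedResidues.1 h).2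

lemma val_mem_reducedResidues {q : ℕ} [NeZero q] {x : ZMod q} (hx : IsUnit x) :
    x.val ∈ reducedResidues q :=
  mem_reducedResidues.2 ⟨ZMod.val_lt x, (ZMod.isUnit_iff_coprime _ q).1 (by simpa using hx)⟩

def invVal (q α : ℕ) : ℕ := ((α : ZMod q)⁻¹).val

lemma natCast_invVal (q α : ℕ) [NeZero q] : (invVal q α : ZMod q) = (α : ZMod q)⁻¹ :=
  ZMod.natCast_zmod_val _

lemma coprime_invVal {q α : ℕ} (h : α.Coprime q) : (invVal q α).Coprime q :=
  (ZMod.isUnit_iff_coprime _ q).1 (.of_mul_eq_one _ (ZMod.val_inv_mul h))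

lemma invVal_injOn (q : ℕ) [NeZero q] : Set.InjOn (invVal q) (reducedResidues q) := by
  intro α hα α' hα' h
  have hinv : (α : ZMod q)⁻¹ = (α' : ZMod q)⁻¹ := by rw [← natCast_invVal, h, natCast_invVal]
  have hcast : (α : ZMod q) = α' := by
    rw [← ZMod.inv_mul_eq_one_of_isUnit (isUnit_of_mem_reducedResidues hα), hinv,
      ZMod.inv_mul_of_unit _ (isUnit_of_mem_reducedResidues hα')]
  rw [mem_coe, mem_reducedResidues] at hα hα'
  simpa [ZMod.val_cast_of_lt hα.1, ZMod.val_cast_of_lt hα'.1] using congrArg ZMod.val hcast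

lemma ramanujanSum_eq_sum (q : ℕ) (n : ℤ) :
    ramanujanSum q n = ∑ α ∈ reducedResidues q, e2 ((α * n : ℤ) / q) :=
  (sum_filter _ _).symm

lemma ramanujanSum_congr {q : ℕ} {n n' : ℤ} (h : (q : ℤ) ∣ n - n') :
    ramanujanSum q n = ramanujanSum q n' := by
  simp_rw [ramanujanSum_eq_sum]
  refine sum_congr rfl fun α _ => e2_div_congr ?_
  rw [← mul_sub]
  exact h.mul_left _

lemma ramanujanSum_mul_of_isUnit {q : ℕ} [NeZero q] {u : ℤ} (hu : IsUnit (u : ZMod q)) (n : ℤ) :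
    ramanujanSum q (u * n) = ramanujanSum q n := by
  simp_rw [ramanujanSum_eq_sum]
  have hback {x : ZMod q} {α : ℕ} (hα : α ∈ reducedResidues q) (hx : (α : ZMod q) = x) :
      x.val = α := by
    rw [← hx, ZMod.val_cast_of_lt (mem_reducedResidues.1 hα).1]
  refine sum_nbij' (fun α => ((u : ZMod q) * α).val) (fun α => ((u : ZMod q)⁻¹ * α).val)
    (fun α hα => val_mem_reducedResidues (hu.mul (isUnit_of_mem_reducedResidues hα)))
    (fun α hα =>
      val_mem_reducedResidues ((ZMod.isUnit_inv hu).mul (isUnit_of_mem_reducedResidues hα)))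
    (fun α hα => hback hα ?_) (fun α hα => hback hα ?_) (fun α _ => e2_div_congr ?_)
  · rw [ZMod.natCast_zmod_val, ← mul_assoc, ZMod.inv_mul_of_unit _ hu, one_mul]
  · rw [ZMod.natCast_zmod_val, ← mul_assoc, ZMod.mul_inv_of_unit _ hu, one_mul]
  · rw [← ZMod.intCast_eq_intCast_iff_dvd_sub]
    push_cast
    rw [ZMod.natCast_zmod_val]
    ring

lemma ramanujanSum_val_inv_sub_val_inv {q : ℕ} [NeZero q] {m m' : ℤ} (hm : IsUnit (m : ZMod q))
    (hm' : IsUnit (m' : ZMod q)) :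
    ramanujanSum q (((m : ZMod q)⁻¹).val - ((m' : ZMod q)⁻¹).val) = ramanujanSum q (m - m') := by
  set u : ℤ := -(((m : ZMod q)⁻¹).val * ((m' : ZMod q)⁻¹).val)
  have hu : (u : ZMod q) = -((m : ZMod q)⁻¹ * (m' : ZMod q)⁻¹) := by
    simp [u]
  calc ramanujanSum q (((m : ZMod q)⁻¹).val - ((m' : ZMod q)⁻¹).val)
      = ramanujanSum q (u * (m - m')) := by
        refine ramanujanSum_congr ?_
        rw [← ZMod.intCast_eq_intCast_iff_dvd_sub]
        push_cast
        rw [hu, ZMod.natCast_zmod_val, ZMod.natCast_zmod_val]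
        linear_combination (m : ZMod q)⁻¹ * ZMod.mul_inv_of_unit _ hm' -
          (m' : ZMod q)⁻¹ * ZMod.mul_inv_of_unit _ hm
    _ = ramanujanSum q (m - m') := by
        refine ramanujanSum_mul_of_isUnit ?_ _
        rw [hu]
        exact ((ZMod.isUnit_inv hm).mul (ZMod.isUnit_inv hm')).neg

lemma div_gcd_dvd_of_dvd_mul {a b : ℕ} {x : ℤ} (ha : 0 < a) (h : (a : ℤ) ∣ x * b) :
    ((a / a.gcd b : ℕ) : ℤ) ∣ x := by
  have hg : 0 < a.gcd b := Nat.gcd_pos_of_pos_left b ha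
  have ha' : ((a / a.gcd b : ℕ) : ℤ) * a.gcd b = a := by
    exact_mod_cast Nat.div_mul_cancel (Nat.gcd_dvd_left a b)
  have hb' : ((b / a.gcd b : ℕ) : ℤ) * a.gcd b = b := by
    exact_mod_cast Nat.div_mul_cancel (Nat.gcd_dvd_right a b)
  refine (Nat.isCoprime_iff_coprime.2 (Nat.coprime_div_gcd_div_gcd hg)).dvd_of_dvd_mul_right
    (Int.dvd_of_mul_dvd_mul_right (a := (a.gcd b : ℤ)) (by exact_mod_cast hg.ne') ?_)
  rwa [ha', mul_assoc, hb']

lemma card_filter_dvd_le_gcd (a b : ℕ) (n : ℤ) :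
    #{p ∈ range a ×ˢ range b | ((a * b : ℕ) : ℤ) ∣ p.1 * b + p.2 * a + n} ≤
      (a.gcd b).gcd n.natAbs := by
  set S := {p ∈ range a ×ˢ range b | ((a * b : ℕ) : ℤ) ∣ p.1 * b + p.2 * a + n}
  have hmem {p : ℕ × ℕ} (hp : p ∈ S) :
      p.1 < a ∧ p.2 < b ∧ ((a * b : ℕ) : ℤ) ∣ p.1 * b + p.2 * a + n := by
    simpa only [S, mem_filter, mem_product, mem_range, and_assoc] using hp
  rcases S.eq_empty_or_nonempty with hS | ⟨p₀, hp₀⟩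
  · simp [hS]
  obtain ⟨hp₀a, -, hp₀n⟩ := hmem hp₀
  have ha : 0 < a := by omega
  have hgn : ((a.gcd b : ℕ) : ℤ) ∣ n := by
    have hab : ((a.gcd b : ℕ) : ℤ) ∣ p₀.1 * b + p₀.2 * a :=
      dvd_add (dvd_mul_of_dvd_right (by exact_mod_cast Nat.gcd_dvd_right a b) _)
        (dvd_mul_of_dvd_right (by exact_mod_cast Nat.gcd_dvd_left a b) _)
    refine (dvd_add_right hab).1 (dvd_trans ?_ hp₀n)
    exact Int.natCast_dvd_natCast.2 ((Nat.gcd_dvd_left a b).trans (dvd_mul_right a b))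
  rw [Nat.gcd_eq_left (Int.natCast_dvd.1 hgn)]
  have ha₁ : 0 < a / a.gcd b := Nat.div_pos (Nat.gcd_le_left b ha) (Nat.gcd_pos_of_pos_left b ha)
  -- the residue of `p.1` modulo `a / gcd a b` is forced, so `p.1` is determined by the quotient
  refine (card_le_card_of_injOn (fun p => p.1 / (a / a.gcd b)) (t := range (a.gcd b))
    (fun p hp => ?_) (fun p hp p' hp' h => ?_)).trans (card_range _).le
  · rw [mem_coe, mem_range, Nat.div_lt_iff_lt_mul ha₁, Nat.mul_div_cancel' (Nat.gcd_dvd_left a b)]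
    exact (hmem hp).1
  obtain ⟨-, hpb, hpn⟩ := hmem hp
  obtain ⟨-, hpb', hpn'⟩ := hmem hp'
  have hdiff : ((a * b : ℕ) : ℤ) ∣ ((p.1 : ℤ) - p'.1) * b + ((p.2 : ℤ) - p'.2) * a :=
    (dvd_sub hpn hpn').trans (dvd_of_eq (by ring))
  have h₁ : p.1 = p'.1 := by
    have hdvd : (a : ℤ) ∣ ((p.1 : ℤ) - p'.1) * b :=
      (dvd_add_left (dvd_mul_left _ _)).1
        ((Int.natCast_dvd_natCast.2 (dvd_mul_right a b)).trans hdiff)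
    exact Nat.ext_div_modEq h (Nat.modEq_iff_dvd.2 (div_gcd_dvd_of_dvd_mul ha hdvd)).symm
  have h₂ : p.2 = p'.2 := by
    rw [h₁, sub_self, zero_mul, zero_add, Nat.cast_mul, mul_comm ((p.2 : ℤ) - p'.2)] at hdiff
    have hdvd₂ := Int.dvd_of_mul_dvd_mul_left (by omega) hdiff
    exact (Nat.modEq_iff_dvd.2 hdvd₂).symm.eq_of_lt_of_lt hpb hpb'
  exact Prod.ext h₁ h₂

/-- The pairs `(α, α')` whose `β`-sum `Σ_β e(β (ᾱ q' + ᾱ' q + n) / (q q'))` does not vanish. -/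
def resonantPairs (q q' : ℕ) (n : ℤ) : Finset (ℕ × ℕ) :=
  {p ∈ reducedResidues q ×ˢ reducedResidues q' |
    ((q * q' : ℕ) : ℤ) ∣ invVal q p.1 * q' + invVal q' p.2 * q + n}

lemma mem_resonantPairs {q q' : ℕ} {n : ℤ} {p : ℕ × ℕ} :
    p ∈ resonantPairs q q' n ↔ p.1 ∈ reducedResidues q ∧ p.2 ∈ reducedResidues q' ∧
      ((q * q' : ℕ) : ℤ) ∣ invVal q p.1 * q' + invVal q' p.2 * q + n := by
  rw [resonantPairs, mem_filter, mem_product, and_assoc]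

lemma kloos_eq_sum (a b : ℤ) (q : ℕ) :
    kloos a b q =
      ∑ α ∈ reducedResidues q, e2 ((a * α : ℤ) / q) * e2 ((b * invVal q α : ℤ) / q) := by
  rw [kloos, reducedResidues, sum_filter]
  refine sum_congr rfl fun α _ => ?_
  rw [← e2_add, ← add_div, ← Int.cast_add]
  rfl

lemma sum_kloos_mul_kloos_mul_e2 (a a' n : ℤ) (q q' : ℕ) [NeZero q] [NeZero q'] :
    ∑ β ∈ range (q * q'), kloos a β q * kloos a' β q' * e2 ((β * n : ℤ) / ((q * q' : ℕ) : ℝ)) =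
      (q * q' : ℕ) *
        ∑ p ∈ resonantPairs q q' n, e2 ((a * p.1 : ℤ) / q) * e2 ((a' * p.2 : ℤ) / q') := by
  have hβ (β : ℕ) (α α' : ℕ) :
      e2 ((β * invVal q α : ℤ) / q) * e2 ((β * invVal q' α' : ℤ) / q') *
        e2 ((β * n : ℤ) / ((q * q' : ℕ) : ℝ)) =
      e2 ((β * (invVal q α * q' + invVal q' α' * q + n) : ℤ) / ((q * q' : ℕ) : ℝ)) := by
    rw [← e2_add, ← e2_add]
    congr 1
    have hq : (q : ℝ) ≠ 0 := NeZero.ne _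
    have hq' : (q' : ℝ) ≠ 0 := NeZero.ne _
    push_cast
    field_simp
  simp_rw [kloos_eq_sum, sum_mul_sum, ← sum_product', sum_mul]
  rw [sum_comm, resonantPairs, sum_filter, mul_sum]
  refine sum_congr rfl fun p _ => ?_
  have hrearrange (β : ℕ) :
      e2 ((a * p.1 : ℤ) / q) * e2 ((β * invVal q p.1 : ℤ) / q) *
        (e2 ((a' * p.2 : ℤ) / q') * e2 ((β * invVal q' p.2 : ℤ) / q')) *
        e2 ((β * n : ℤ) / ((q * q' : ℕ) : ℝ)) =
      e2 ((a * p.1 : ℤ) / q) * e2 ((a' * p.2 : ℤ) / q') *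
        e2 ((β * (invVal q p.1 * q' + invVal q' p.2 * q + n) : ℤ) / ((q * q' : ℕ) : ℝ)) := by
    rw [← hβ]
    ring
  simp_rw [hrearrange, ← mul_sum, sum_range_e2_mul_div]
  split_ifs <;> ring

lemma charSum_eq (qh qh' : ℕ) [NeZero qh] [NeZero qh'] (m m' n₂ : ℤ) :
    charSum qh qh' m m' n₂ = (qh * qh' : ℕ) * ∑ p ∈ resonantPairs qh qh' n₂,
      e2 ((((m : ZMod qh)⁻¹).val * p.1 : ℤ) / qh) *
        e2 ((((m' : ZMod qh')⁻¹).val * p.2 : ℤ) / qh') :=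
  sum_kloos_mul_kloos_mul_e2 _ _ _ _ _

lemma card_resonantPairs_le (q q' : ℕ) [NeZero q] [NeZero q'] (n : ℤ) :
    #(resonantPairs q q' n) ≤ (q.gcd q').gcd n.natAbs := by
  refine (card_le_card_of_injOn (fun p => (invVal q p.1, invVal q' p.2)) (fun p hp => ?_)
    (fun p hp p' hp' h => ?_)).trans (card_filter_dvd_le_gcd q q' n)
  · rw [mem_coe, mem_resonantPairs] at hp
    rw [mem_coe, mem_filter, mem_product, mem_range, mem_range]
    exact ⟨⟨ZMod.val_lt _, ZMod.val_lt _⟩, hp.2.2⟩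
  · rw [mem_coe, mem_resonantPairs] at hp hp'
    obtain ⟨h₁, h₂⟩ := Prod.ext_iff.1 h
    exact Prod.ext (invVal_injOn q hp.1 hp'.1 h₁) (invVal_injOn q' hp.2.1 hp'.2.1 h₂)

lemma norm_charSum_le (qh qh' : ℕ) [NeZero qh] [NeZero qh'] (m m' n₂ : ℤ) :
    ‖charSum qh qh' m m' n₂‖ ≤
      (qh : ℝ) * (qh' : ℝ) * ((Nat.gcd (Nat.gcd qh qh') n₂.natAbs : ℕ) : ℝ) := by
  rw [charSum_eq, norm_mul, Complex.norm_natCast, Nat.cast_mul]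
  gcongr
  refine (norm_sum_le _ _).trans ?_
  simp only [norm_mul, norm_e2, mul_one, sum_const, nsmul_eq_mul]
  exact_mod_cast card_resonantPairs_le qh qh' n₂

lemma dvd_of_coprime_of_mul_dvd_add {a b x : ℕ} {y : ℤ} (hx : x.Coprime a)
    (h : ((a * b : ℕ) : ℤ) ∣ x * b + y * a) : a ∣ b := by
  have hxb : (a : ℤ) ∣ x * b :=
    (dvd_add_left (dvd_mul_left _ _)).1 ((Int.natCast_dvd_natCast.2 (dvd_mul_right a b)).trans h)
  exact hx.symm.dvd_of_dvd_mul_left (by exact_mod_cast hxb)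

lemma resonantPairs_zero_eq_empty {q q' : ℕ} (h : q ≠ q') : resonantPairs q q' 0 = ∅ := by
  refine eq_empty_of_forall_notMem fun p hp => h ?_
  obtain ⟨hα, hα', hdvd⟩ := mem_resonantPairs.1 hp
  rw [add_zero] at hdvd
  refine Nat.dvd_antisymm (dvd_of_coprime_of_mul_dvd_add
    (coprime_invVal (mem_reducedResidues.1 hα).2) hdvd) (dvd_of_coprime_of_mul_dvd_add
    (coprime_invVal (mem_reducedResidues.1 hα').2) (y := invVal q p.1) ?_)
  rwa [mul_comm q', add_comm]

lemma ZMod.inv_add_inv_eq_zero_iff {q : ℕ} {x y : ZMod q} (hx : IsUnit x) (hy : IsUnit y) :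
    x⁻¹ + y⁻¹ = 0 ↔ x + y = 0 := by
  rw [show x⁻¹ + y⁻¹ = x⁻¹ * y⁻¹ * (x + y) by
    linear_combination -y⁻¹ * ZMod.inv_mul_of_unit x hx - x⁻¹ * ZMod.inv_mul_of_unit y hy]
  exact ((IsUnit.of_mul_eq_one _ (ZMod.inv_mul_of_unit x hx)).mul
    (IsUnit.of_mul_eq_one _ (ZMod.inv_mul_of_unit y hy))).mul_right_eq_zero

lemma mul_dvd_invVal_add_invVal_iff {q α α' : ℕ} [NeZero q] (hα : α ∈ reducedResidues q)
    (hα' : α' ∈ reducedResidues q) :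
    ((q * q : ℕ) : ℤ) ∣ invVal q α * q + invVal q α' * q + 0 ↔ (-(α : ZMod q)).val = α' := by
  rw [add_zero, ← add_mul, Nat.cast_mul, mul_dvd_mul_iff_right (by exact_mod_cast NeZero.ne q),
    ← ZMod.intCast_zmod_eq_zero_iff_dvd]
  push_cast
  rw [natCast_invVal, natCast_invVal, ZMod.inv_add_inv_eq_zero_iff
    (isUnit_of_mem_reducedResidues hα) (isUnit_of_mem_reducedResidues hα'),
    ← neg_eq_iff_add_eq_zero]
  constructor
  · rintro h; rw [h, ZMod.val_cast_of_lt (mem_reducedResidues.1 hα').1]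
  · rintro h; rw [← h, ZMod.natCast_zmod_val]

lemma sum_resonantPairs_self_zero (q : ℕ) [NeZero q] (f : ℕ × ℕ → ℂ) :
    ∑ p ∈ resonantPairs q q 0, f p = ∑ α ∈ reducedResidues q, f (α, (-(α : ZMod q)).val) := by
  rw [resonantPairs, sum_filter, sum_product]
  refine sum_congr rfl fun α hα => ?_
  have hneg := val_mem_reducedResidues (isUnit_of_mem_reducedResidues hα).neg
  rw [← sum_ite_eq_of_mem _ _ (fun α' => f (α, α')) hneg]
  exact sum_congr rfl fun α' hα' => if_congr (mul_dvd_invVal_add_invVal_iff hα hα') rfl rfl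

lemma charSum_self_zero (q : ℕ) [NeZero q] {m m' : ℤ} (hm : IsUnit (m : ZMod q))
    (hm' : IsUnit (m' : ZMod q)) : charSum q q m m' 0 = (q * q : ℕ) * ramanujanSum q (m - m') := by
  rw [charSum_eq, sum_resonantPairs_self_zero, ← ramanujanSum_val_inv_sub_val_inv hm hm',
    ramanujanSum_eq_sum]
  refine congrArg _ (sum_congr rfl fun α _ => ?_)
  rw [← e2_add, ← add_div, ← Int.cast_add]
  refine e2_div_congr ((ZMod.intCast_zmod_eq_zero_iff_dvd _ _).1 ?_)
  push_cast
  simp only [ZMod.natCast_zmod_val]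
  ring

/-- `|𝔠| ≤ q̂ q̂' gcd(q̂, q̂', n₂)`; moreover if `n₂ = 0` then `𝔠 = 0` unless `q̂ = q̂'`,
in which case `|𝔠| ≤ q̂ q̂' |c_{q̂}(m − m')|`. -/
theorem stmt_4 (qh qh' : ℕ) (hq : 0 < qh) (hq' : 0 < qh') (m m' n₂ : ℤ)
    (hm : IsCoprime m (qh : ℤ)) (hm' : IsCoprime m' (qh' : ℤ)) :
    ‖charSum qh qh' m m' n₂‖ ≤
      (qh : ℝ) * (qh' : ℝ) * ((Nat.gcd (Nat.gcd qh qh') n₂.natAbs : ℕ) : ℝ) ∧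
    (n₂ = 0 →
      (qh ≠ qh' → charSum qh qh' m m' 0 = 0) ∧
      (qh = qh' → ‖charSum qh qh' m m' 0‖ ≤
        (qh : ℝ) * (qh' : ℝ) * ‖ramanujanSum qh (m - m')‖)) := by
  have := NeZero.of_pos hq
  have := NeZero.of_pos hq'
  refine ⟨norm_charSum_le qh qh' m m' n₂, fun _ => ⟨fun hne => ?_, ?_⟩⟩
  · rw [charSum_eq, resonantPairs_zero_eq_empty hne, sum_empty, mul_zero]
  · rintro rfl
    rw [charSum_self_zero qh ((ZMod.coe_int_isUnit_iff_isCoprime m qh).2 hm.symm)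
      ((ZMod.coe_int_isUnit_iff_isCoprime m' qh).2 hm'.symm), norm_mul, Complex.norm_natCast,
      Nat.cast_mul]
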